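/- arXiv:1504.02427 — 4 statements merged into one kernel-verified Lean document; each statement's English description precedes it below -/
import Mathlib

section
/- If R is a distance monoid whose set of nonzero elements has exactly n elements and arch(R) = n, then R is isomorphic as an ordered monoid to Rₙ = ({0, 1, ..., n}, +ₙ, ≤, 0), where +ₙ is addition truncated at n. -/
open Finset

def Usum {R : Type*} [AddCommMonoid R] (f : ℕ → R) (j : ℕ) : R :=
  ∑ i ∈ Finset.range j, f (i + 1)

lemma Usum_zero {R : Type*} [AddCommMonoid R] (f : ℕ → R) : Usum f 0 = 0 :=
  Finset.sum_range_zero _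

lemma Usum_succ {R : Type*} [AddCommMonoid R] (f : ℕ → R) (j : ℕ) :
    Usum f (j + 1) = Usum f j + f (j + 1) :=
  Finset.sum_range_succ _ _

def Tsum {R : Type*} [AddCommMonoid R] (f : ℕ → R) (j : ℕ) : R :=
  f 0 + Usum f j

lemma Tsum_succ {R : Type*} [AddCommMonoid R] (f : ℕ → R) (j : ℕ) :
    Tsum f (j + 1) = Tsum f j + f (j + 1) := by
  simp [Tsum, Usum_succ, add_assoc]

theorem aux {R : Type*} [AddCommMonoid R] [LinearOrder R] [IsOrderedAddMonoid R] (h0 : ∀ r : R, 0 ≤ r)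
    (m : ℕ)
    (hfin : {r : R | r ≠ 0}.Finite) (hcard : {r : R | r ≠ 0}.ncard = m + 1)
    (f : ℕ → R) (hf : Monotone f)
    (hne : f 0 + Usum f m ≠ Usum f m) :
    ∃ e : R ≃o Fin (m + 2), e 0 = 0 ∧
      ∀ r s : R, ((e (r + s) : ℕ)) = min ((e r : ℕ) + (e s : ℕ)) (m + 1) := by
  have ha : f 0 ≠ 0 := fun h => hne (by rw [h, zero_add])
  have ha0 : 0 < f 0 := lt_of_le_of_ne (h0 _) (Ne.symm ha)
  have hUnonneg : ∀ j, 0 ≤ Usum f j := fun j => Finset.sum_nonneg fun i _ => h0 _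
  have hUmono : Monotone (Usum f) := by
    intro j k hjk
    exact Finset.sum_le_sum_of_subset_of_nonneg (Finset.range_subset_range.2 hjk)
      (fun i _ _ => h0 _)
  have hT0 : Tsum f 0 = f 0 := by simp [Tsum, Usum_zero]
  have hTpos : ∀ j, 0 < Tsum f j := fun j =>
    lt_of_lt_of_le ha0 (le_add_of_nonneg_right (hUnonneg j))
  have hTne0 : ∀ j, Tsum f j ≠ 0 := fun j => (hTpos j).ne'
  -- strict chain
  have hTlt : ∀ j, j < m → Tsum f j < Tsum f (j + 1) := by
    intro j hj
    have hle : Tsum f j ≤ Tsum f (j + 1) := by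
      rw [Tsum_succ]; exact le_add_of_nonneg_right (h0 _)
    rcases hle.lt_or_eq with h | h
    · exact h
    exfalso
    apply hne
    have hV : Usum f (j + 1) + ∑ i ∈ Finset.Ico (j + 1) m, f (i + 1) = Usum f m :=
      Finset.sum_range_add_sum_Ico _ (by omega)
    set V := ∑ i ∈ Finset.Ico (j + 1) m, f (i + 1) with hVdef
    have h1 : f 0 + Usum f m = (f 0 + Usum f j) + V := by
      rw [← hV, ← add_assoc]
      have : f 0 + Usum f (j + 1) = f 0 + Usum f j := h.symm
      rw [this]
    have h2 : (f 0 + Usum f j) + V ≤ (f (j + 1) + Usum f j) + V :=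
      add_le_add_left (add_le_add_left (hf (Nat.zero_le _)) _) _
    have h3 : (f (j + 1) + Usum f j) + V = Usum f m := by
      rw [add_comm (f (j + 1)), ← Usum_succ, hV]
    have h4 : f 0 + Usum f m ≤ Usum f m := by rw [h1, ← h3]; exact h2
    exact le_antisymm h4 (le_add_of_nonneg_left (h0 _))
  have hTlt' : ∀ j k, j < k → k ≤ m → Tsum f j < Tsum f k := by
    intro j k
    induction k with
    | zero => omega
    | succ k ih =>
      intro hjk hkm
      rcases Nat.lt_succ_iff_lt_or_eq.mp hjk with h | h
      · exact (ih h (by omega)).trans (hTlt k (by omega))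
      · subst h; exact hTlt j (by omega)
  have hTle : ∀ j k, j ≤ k → k ≤ m → Tsum f j ≤ Tsum f k := by
    intro j k hjk hkm
    rcases hjk.lt_or_eq with h | h
    · exact (hTlt' j k h hkm).le
    · subst h; exact le_rfl
  -- image = nonzero elements
  have himg : Tsum f '' (Set.Iic m) = {r : R | r ≠ 0} := by
    apply Set.eq_of_subset_of_ncard_le
    · rintro r ⟨j, _, rfl⟩; exact hTne0 j
    · have hinj : Set.InjOn (Tsum f) (Set.Iic m) := by
        intro x hx y hy hxy
        by_contra hne'
        rcases lt_or_gt_of_ne hne' with h | h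
        · exact (hTlt' x y h hy).ne hxy
        · exact (hTlt' y x h hx).ne hxy.symm
      rw [Set.ncard_image_of_injOn hinj, hcard]
      have : (Set.Iic m) = ↑(Finset.Iic m) := by simp
      rw [this, Set.ncard_coe_finset, Nat.card_Iic]
    · exact hfin
  have hmem : ∀ r : R, r ≠ 0 → ∃ j, j ≤ m ∧ Tsum f j = r := by
    intro r hr
    have : r ∈ Tsum f '' (Set.Iic m) := himg.symm ▸ hr
    obtain ⟨j, hj, hje⟩ := this
    exact ⟨j, hj, hje⟩
  have htop : ∀ r : R, r ≤ Tsum f m := by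
    intro r
    by_cases hr : r = 0
    · rw [hr]; exact h0 _
    · obtain ⟨j, hj, hje⟩ := hmem r hr
      rw [← hje]; exact hTle j m hj le_rfl
  have habs : f 0 + Tsum f m = Tsum f m :=
    le_antisymm (htop _) (le_add_of_nonneg_left (h0 _))
  -- the step lemma
  have hstep : ∀ j, j < m → f 0 + Tsum f j = Tsum f (j + 1) := by
    intro j hj
    have h1 : f 0 + Tsum f j ≤ Tsum f (j + 1) := by
      rw [Tsum_succ, add_comm (Tsum f j)]
      exact add_le_add_left (hf (Nat.zero_le _)) _
    have h2 : Tsum f j < f 0 + Tsum f j := by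
      rcases (le_add_of_nonneg_left (h0 (f 0)) :
          Tsum f j ≤ f 0 + Tsum f j).lt_or_eq with h | h
      · exact h
      exfalso
      have heq : f 0 + Tsum f j = Tsum f j := h.symm
      have hprop : ∀ k, j ≤ k → f 0 + Tsum f k = Tsum f k := by
        intro k hk
        induction k, hk using Nat.le_induction with
        | base => exact heq
        | succ k hk ih => rw [Tsum_succ, ← add_assoc, ih]
      have hSj : Tsum f j ≤ Usum f m := by
        calc Tsum f j = f 0 + Usum f j := rfl
          _ ≤ f (j + 1) + Usum f j := add_le_add_left (hf (Nat.zero_le _)) _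
          _ = Usum f (j + 1) := by rw [add_comm, ← Usum_succ]
          _ ≤ Usum f m := hUmono (by omega)
      have hS0 : Usum f m ≠ 0 := (lt_of_lt_of_le (hTpos j) hSj).ne'
      obtain ⟨k, hk, hkeq⟩ := hmem _ hS0
      have hjk : j ≤ k := by
        by_contra hc
        push_neg at hc
        exact absurd (hkeq ▸ hSj) (not_le.mpr (hTlt' k j hc (by omega)))
      exact hne (by rw [← hkeq]; exact hprop k hjk)
    have hne0 : f 0 + Tsum f j ≠ 0 := (lt_of_le_of_lt (h0 _) h2).ne'
    obtain ⟨k, hk, hkeq⟩ := hmem _ hne0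
    have hjk : j < k := by
      by_contra hc
      push_neg at hc
      exact absurd (hkeq ▸ hTle k j hc (by omega)) (not_le.mpr h2)
    exact le_antisymm h1 (hkeq ▸ hTle (j + 1) k hjk hk)
  -- multiples of a := f 0
  have hsm : ∀ k : ℕ, k ≤ m → (k + 1) • f 0 = Tsum f k := by
    intro k
    induction k with
    | zero => intro _; rw [one_nsmul, hT0]
    | succ k ih =>
      intro hk
      rw [succ_nsmul, add_comm, ih (by omega), hstep k (by omega)]
  have hsat : ∀ k : ℕ, m + 1 ≤ k → k • f 0 = Tsum f m := by
    intro k hk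
    induction k, hk using Nat.le_induction with
    | base => exact hsm m le_rfl
    | succ k hk ih => rw [succ_nsmul, ih, add_comm, habs]
  have hmin : ∀ k : ℕ, k • f 0 = (min k (m + 1)) • f 0 := by
    intro k
    rcases le_or_gt k (m + 1) with h | h
    · rw [min_eq_left h]
    · rw [min_eq_right h.le, hsat k (by omega), hsat (m + 1) le_rfl]
  -- the order iso
  set ψ : Fin (m + 2) → R := fun k => (k : ℕ) • f 0 with hψdef
  have hlt1 : ∀ k : ℕ, k < m + 1 → k • f 0 < (k + 1) • f 0 := by
    intro k hk
    cases k with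
    | zero => rw [zero_nsmul, one_nsmul]; exact ha0
    | succ k =>
      rw [hsm k (by omega), hsm (k + 1) (by omega)]
      exact hTlt k (by omega)
  have hltgen : ∀ x y : ℕ, x < y → y ≤ m + 1 → x • f 0 < y • f 0 := by
    intro x y
    induction y with
    | zero => omega
    | succ y ih =>
      intro hxy hym
      rcases Nat.lt_succ_iff_lt_or_eq.mp hxy with h | h
      · exact (ih h (by omega)).trans (hlt1 y (by omega))
      · subst h; exact hlt1 x (by omega)
  have hψsm : StrictMono ψ := by
    intro x y hxy
    exact hltgen x y hxy (by omega)
  have hψsurj : Function.Surjective ψ := by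
    intro r
    by_cases hr : r = 0
    · exact ⟨⟨0, by omega⟩, by simp [hψdef, hr]⟩
    · obtain ⟨j, hj, hje⟩ := hmem r hr
      exact ⟨⟨j + 1, by omega⟩, by simp only [hψdef]; rw [hsm j hj]; exact hje⟩
  let iso : Fin (m + 2) ≃o R := StrictMono.orderIsoOfSurjective ψ hψsm hψsurj
  have hisoapp : ∀ k, iso k = ψ k := fun k => rfl
  refine ⟨iso.symm, ?_, ?_⟩
  · rw [OrderIso.symm_apply_eq, hisoapp]
    simp [hψdef]
  · intro r s
    have hr : r = ψ (iso.symm r) := by rw [← hisoapp, OrderIso.apply_symm_apply]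
    have hs : s = ψ (iso.symm s) := by rw [← hisoapp, OrderIso.apply_symm_apply]
    set i : ℕ := (iso.symm r : ℕ)
    set j : ℕ := (iso.symm s : ℕ)
    have hij : min (i + j) (m + 1) < m + 2 := by omega
    have hrs : r + s = ψ ⟨min (i + j) (m + 1), hij⟩ := by
      rw [hr, hs]
      simp only [hψdef]
      rw [← add_nsmul, hmin (i + j)]
    have : iso.symm (r + s) = ⟨min (i + j) (m + 1), hij⟩ := by
      rw [OrderIso.symm_apply_eq, hisoapp, ← hrs]
    rw [this]



/-- If the set of nonzero elements of a distance monoid R has exactly n elements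
and arch(R) = n, then R is isomorphic as an ordered monoid to
Rₙ = ({0,...,n}, +ₙ, ≤, 0) with +ₙ addition truncated at n. -/
theorem stmt4 {R : Type*} [AddCommMonoid R] [LinearOrder R] [IsOrderedAddMonoid R] (h0 : ∀ r : R, 0 ≤ r)
    (n : ℕ) (hn : 1 ≤ n)
    (hfin : {r : R | r ≠ 0}.Finite) (hcard : {r : R | r ≠ 0}.ncard = n)
    (harch : ∀ f : ℕ → R, Monotone f →
      f 0 + ∑ i ∈ Finset.range n, f (i + 1) = ∑ i ∈ Finset.range n, f (i + 1))
    (harch' : ¬ ∀ f : ℕ → R, Monotone f →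
      f 0 + ∑ i ∈ Finset.range (n - 1), f (i + 1) =
        ∑ i ∈ Finset.range (n - 1), f (i + 1)) :
    ∃ e : R ≃o Fin (n + 1), e 0 = 0 ∧
      ∀ r s : R, ((e (r + s) : ℕ)) = min ((e r : ℕ) + (e s : ℕ)) n := by
  obtain ⟨m, rfl⟩ : ∃ m, n = m + 1 := ⟨n - 1, by omega⟩
  simp only [Nat.add_sub_cancel] at harch'
  push_neg at harch'
  obtain ⟨f, hf, hne⟩ := harch'
  exact aux h0 m hfin hcard f hf hne
end

section
/- Let R be an archimedean distance monoid such that s ≤ n·r for all nonzero r, s ∈ R, for some fixed n ≥ 1. Then arch(R) ≤ n; that is, for all r₀ ≤ r₁ ≤ ... ≤ rₙ in R, r₀ ⊕ r₁ ⊕ ... ⊕ rₙ = r₁ ⊕ ... ⊕ rₙ. -/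
/-- If R is an archimedean distance monoid such that `s ≤ n • r` for all nonzero
`r, s` (for a fixed `n ≥ 1`), then arch(R) ≤ n: for all chains
r₀ ≤ r₁ ≤ ... ≤ rₙ, one has r₀ ⊕ r₁ ⊕ ... ⊕ rₙ = r₁ ⊕ ... ⊕ rₙ. -/
theorem stmt6 {R : Type*} [AddCommMonoid R] [LinearOrder R] [IsOrderedAddMonoid R] (h0 : ∀ r : R, 0 ≤ r)
    (harch : ∀ r s : R, r ≠ 0 → s ≠ 0 → ∃ m : ℕ, 1 ≤ m ∧ s ≤ m • r)
    (n : ℕ) (hn : 1 ≤ n)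
    (hbound : ∀ r s : R, r ≠ 0 → s ≠ 0 → s ≤ n • r) :
    ∀ f : ℕ → R, Monotone f →
      f 0 + ∑ i ∈ Finset.range n, f (i + 1) = ∑ i ∈ Finset.range n, f (i + 1) := by
  intro f hf
  set S := ∑ i ∈ Finset.range n, f (i + 1) with hS
  by_cases hf0 : f 0 = 0
  · simp [hf0]
  · have hpos : 0 < f 0 := lt_of_le_of_ne (h0 _) (Ne.symm hf0)
    have hne : f 0 + S ≠ 0 := by
      have : 0 < f 0 + S := lt_of_lt_of_le hpos (le_add_of_nonneg_right (h0 _))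
      exact this.ne'
    have hnsmul : n • f 0 ≤ S := by
      have := Finset.card_nsmul_le_sum (Finset.range n) (fun i => f (i + 1)) (f 0)
        (fun i _ => hf (Nat.zero_le _))
      simpa using this
    exact le_antisymm ((hbound (f 0) (f 0 + S) hf0 hne).trans hnsmul)
      (le_add_of_nonneg_left (h0 _))
end

section
/- Let R be a distance monoid and fix n ≥ 2 and elements α₁ ≤ α₂ ≤ ... ≤ αₙ in R. Define a distance function on pairs (l, i) with l < ω and 1 ≤ i ≤ n by: d((k,i),(l,j)) = αⱼ ⊕ αⱼ₊₁ ⊕ ... ⊕ αᵢ if (k < l and i ≥ j) or (k = l and i > j); d((k,i),(l,j)) = αᵢ₊₁ ⊕ ... ⊕ αⱼ if k < l and i < j; extended symmetrically and with d(x,x) = 0. Then d satisfies the triangle inequality d(x,z) ≤ d(x,y) ⊕ d(y,z), so this defines an R-pseudometric (and an R-metric if all αᵢ > 0). -/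
section Aux
variable {R : Type*} [AddCommMonoid R] [LinearOrder R] [IsOrderedAddMonoid R]

private lemma shift0 (β : ℕ → R) (hm : Monotone β) (h0' : ∀ m, 0 ≤ β m)
    (a b c d : ℕ) (hbd : b ≤ d) (hlen : b - a ≤ d - c) :
    ∑ m ∈ Finset.Ico a b, β m ≤ ∑ m ∈ Finset.Ico c d, β m := by
  rcases le_or_gt b a with h | h
  · rw [Finset.Ico_eq_empty (by omega), Finset.sum_empty]
    exact Finset.sum_nonneg fun i _ => h0' i
  · have key : ∑ m ∈ Finset.Ico a b, β m ≤ ∑ m ∈ Finset.Ico (a + (d - b)) (b + (d - b)), β m := by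
      rw [← Finset.map_add_right_Ico, Finset.sum_map]
      exact Finset.sum_le_sum fun i _ => hm (Nat.le_add_right _ _)
    refine key.trans (Finset.sum_le_sum_of_subset_of_nonneg
      (Finset.Ico_subset_Ico (by omega) (by omega)) fun i _ _ => h0' i)

private lemma half (β : ℕ → R) (hm : Monotone β) (h0' : ∀ m, 0 ≤ β m)
    (a b c d e f : ℕ) (hab : a < b) (hbf : b ≤ f)
    (hrest : b - a ≤ f - e ∨ (b - (f - e) ≤ d ∧ (b - a) - (f - e) ≤ d - c)) :
    ∑ m ∈ Finset.Ico a b, β m ≤ ∑ m ∈ Finset.Ico c d, β m + ∑ m ∈ Finset.Ico e f, β m := by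
  set u := max a (b - (f - e)) with hu
  have hau : a ≤ u := le_max_left _ _
  have hub : u ≤ b := by omega
  rw [← Finset.sum_Ico_consecutive β hau hub]
  rcases le_or_gt (b - (f - e)) a with h | h
  · have hua : u = a := by omega
    rw [hua, Finset.Ico_self, Finset.sum_empty, zero_add, add_comm]
    refine le_add_of_le_of_nonneg ?_ (Finset.sum_nonneg fun i _ => h0' i)
    exact shift0 β hm h0' a b e f hbf (by omega)
  · have hub' : u = b - (f - e) := by omega
    rcases hrest with h' | ⟨h1, h2⟩
    · omega
    · exact add_le_add (shift0 β hm h0' a u c d (by omega) (by omega))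
        (shift0 β hm h0' u b e f hbf (by omega))

private lemma master2 (β : ℕ → R) (hm : Monotone β) (h0' : ∀ m, 0 ≤ β m)
    (a b c d e f : ℕ)
    (H : b ≤ a ∨
      (b ≤ f ∧ (b - a ≤ f - e ∨ (b - (f - e) ≤ d ∧ (b - a) - (f - e) ≤ d - c))) ∨
      (b ≤ d ∧ (b - a ≤ d - c ∨ (b - (d - c) ≤ f ∧ (b - a) - (d - c) ≤ f - e)))) :
    ∑ m ∈ Finset.Ico a b, β m ≤ ∑ m ∈ Finset.Ico c d, β m + ∑ m ∈ Finset.Ico e f, β m := by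
  rcases le_or_gt b a with h | h
  · rw [Finset.Ico_eq_empty (by omega), Finset.sum_empty]
    exact add_nonneg (Finset.sum_nonneg fun i _ => h0' i) (Finset.sum_nonneg fun i _ => h0' i)
  rcases H with h' | ⟨h1, h2⟩ | ⟨h1, h2⟩
  · omega
  · exact half β hm h0' a b c d e f h h1 h2
  · rw [add_comm]; exact half β hm h0' a b e f c d h h1 h2

end Aux

set_option maxHeartbeats 2000000 in
/-- The explicit distance function on ℕ × {1,...,n} built from a monotone tuple
α₁ ≤ ... ≤ αₙ (indexed here by Fin n) is symmetric, vanishes on the diagonal,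
satisfies the triangle inequality with respect to ⊕, and is an R-metric
whenever all αᵢ are positive. -/
theorem stmt10 {R : Type*} [AddCommMonoid R] [LinearOrder R] [IsOrderedAddMonoid R] (h0 : ∀ r : R, 0 ≤ r)
    (n : ℕ) (hn : 2 ≤ n) (α : Fin n → R) (hα : Monotone α)
    (D : ℕ × Fin n → ℕ × Fin n → R)
    (hD : ∀ x y : ℕ × Fin n, D x y =
      if x = y then 0
      else if x.1 = y.1 then ∑ m ∈ Finset.Icc (min x.2 y.2) (max x.2 y.2), α m
      else if x.1 < y.1 then
        (if y.2 ≤ x.2 then ∑ m ∈ Finset.Icc y.2 x.2, α m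
         else ∑ m ∈ Finset.Ioc x.2 y.2, α m)
      else
        (if x.2 ≤ y.2 then ∑ m ∈ Finset.Icc x.2 y.2, α m
         else ∑ m ∈ Finset.Ioc y.2 x.2, α m)) :
    (∀ x y, D x y = D y x) ∧ (∀ x, D x x = 0) ∧
    (∀ x y z, D x z ≤ D x y + D y z) ∧
    ((∀ i, 0 < α i) → ∀ x y, D x y = 0 → x = y) := by
  set β : ℕ → R := fun m => α ⟨min m (n - 1), by omega⟩ with hβdef
  have hβm : Monotone β := by
    intro u v huv
    exact hα (by simp only [Fin.le_def]; omega)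
  have hβ0 : ∀ m, 0 ≤ β m := fun m => h0 _
  have hβα : ∀ i : Fin n, β (i : ℕ) = α i := by
    intro i
    have := i.isLt
    simp only [hβdef]
    congr 1
    exact Fin.ext (by simp only [Fin.val_mk]; omega)
  have hIcc : ∀ a b : Fin n, ∑ m ∈ Finset.Icc a b, α m
      = ∑ m ∈ Finset.Ico (a : ℕ) ((b : ℕ) + 1), β m := by
    intro a b
    rw [Finset.Ico_add_one_right_eq_Icc, ← Fin.map_valEmbedding_Icc, Finset.sum_map]
    exact Finset.sum_congr rfl fun i _ => (hβα i).symm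
  have hIoc : ∀ a b : Fin n, ∑ m ∈ Finset.Ioc a b, α m
      = ∑ m ∈ Finset.Ico ((a : ℕ) + 1) ((b : ℕ) + 1), β m := by
    intro a b
    rw [Finset.Ico_add_one_add_one_eq_Ioc, ← Fin.map_valEmbedding_Ioc, Finset.sum_map]
    exact Finset.sum_congr rfl fun i _ => (hβα i).symm
  -- the key structural description of D
  have hE : ∀ x y : ℕ × Fin n, ∃ lo hi : ℕ,
      ((x.1 = y.1 ∧ (x.2 : ℕ) = (y.2 : ℕ) ∧ lo = 1 ∧ hi = 0) ∨
       (x.1 = y.1 ∧ (x.2 : ℕ) < (y.2 : ℕ) ∧ lo = (x.2 : ℕ) ∧ hi = (y.2 : ℕ)) ∨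
       (x.1 = y.1 ∧ (y.2 : ℕ) < (x.2 : ℕ) ∧ lo = (y.2 : ℕ) ∧ hi = (x.2 : ℕ)) ∨
       (x.1 < y.1 ∧ (y.2 : ℕ) ≤ (x.2 : ℕ) ∧ lo = (y.2 : ℕ) ∧ hi = (x.2 : ℕ)) ∨
       (x.1 < y.1 ∧ (x.2 : ℕ) < (y.2 : ℕ) ∧ lo = (x.2 : ℕ) + 1 ∧ hi = (y.2 : ℕ)) ∨
       (y.1 < x.1 ∧ (x.2 : ℕ) ≤ (y.2 : ℕ) ∧ lo = (x.2 : ℕ) ∧ hi = (y.2 : ℕ)) ∨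
       (y.1 < x.1 ∧ (y.2 : ℕ) < (x.2 : ℕ) ∧ lo = (y.2 : ℕ) + 1 ∧ hi = (x.2 : ℕ))) ∧
      D x y = ∑ m ∈ Finset.Ico lo (hi + 1), β m := by
    intro x y
    rw [hD x y]
    split_ifs with h1 h2 h3 h4 h5
    · refine ⟨1, 0, ?_, by simp⟩
      have e1 : x.1 = y.1 := by rw [h1]
      have e2 : (x.2 : ℕ) = (y.2 : ℕ) := by rw [h1]
      exact Or.inl ⟨e1, e2, rfl, rfl⟩
    · have e2 : (x.2 : ℕ) ≠ (y.2 : ℕ) := fun hc => h1 (Prod.ext h2 (Fin.ext hc))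
      rcases le_total x.2 y.2 with hle | hle
      · refine ⟨(x.2 : ℕ), (y.2 : ℕ), ?_, ?_⟩
        · exact Or.inr (Or.inl ⟨h2, lt_of_le_of_ne (Fin.le_def.mp hle) e2, rfl, rfl⟩)
        · rw [min_eq_left hle, max_eq_right hle, hIcc]
      · refine ⟨(y.2 : ℕ), (x.2 : ℕ), ?_, ?_⟩
        · exact Or.inr (Or.inr (Or.inl ⟨h2,
            lt_of_le_of_ne (Fin.le_def.mp hle) (Ne.symm e2), rfl, rfl⟩))
        · rw [min_eq_right hle, max_eq_left hle, hIcc]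
    · exact ⟨(y.2 : ℕ), (x.2 : ℕ),
        Or.inr (Or.inr (Or.inr (Or.inl ⟨h3, Fin.le_def.mp h4, rfl, rfl⟩))), by rw [hIcc]⟩
    · exact ⟨(x.2 : ℕ) + 1, (y.2 : ℕ),
        Or.inr (Or.inr (Or.inr (Or.inr (Or.inl
          ⟨h3, Fin.lt_def.mp (lt_of_not_ge h4), rfl, rfl⟩)))), by rw [hIoc]⟩
    · exact ⟨(x.2 : ℕ), (y.2 : ℕ),
        Or.inr (Or.inr (Or.inr (Or.inr (Or.inr (Or.inl
          ⟨by omega, Fin.le_def.mp h5, rfl, rfl⟩))))), by rw [hIcc]⟩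
    · exact ⟨(y.2 : ℕ) + 1, (x.2 : ℕ),
        Or.inr (Or.inr (Or.inr (Or.inr (Or.inr (Or.inr
          ⟨by omega, Fin.lt_def.mp (lt_of_not_ge h5), rfl, rfl⟩))))), by rw [hIoc]⟩
  refine ⟨?_, ?_, ?_, ?_⟩
  · -- symmetry
    intro x y
    obtain ⟨a, b, hP, hS⟩ := hE x y
    obtain ⟨c, d, hP', hS'⟩ := hE y x
    rw [hS, hS']
    have : a = c ∧ b = d := by omega
    rw [this.1, this.2]
  · -- diagonal
    intro x
    rw [hD x x]
    simp
  · -- triangle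
    intro x y z
    obtain ⟨a, b, hP1, hS1⟩ := hE x z
    obtain ⟨c, d, hP2, hS2⟩ := hE x y
    obtain ⟨e, f, hP3, hS3⟩ := hE y z
    rw [hS1, hS2, hS3]
    refine master2 β hβm hβ0 a (b + 1) c (d + 1) e (f + 1) ?_
    clear hS1 hS2 hS3 hE hIcc hIoc hβm hβ0 hβα hD hα h0
    rcases hP1 with h1 | h1 | h1 | h1 | h1 | h1 | h1 <;>
    rcases hP2 with h2 | h2 | h2 | h2 | h2 | h2 | h2 <;>
    rcases hP3 with h3 | h3 | h3 | h3 | h3 | h3 | h3 <;>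
    omega
  · -- metric
    intro hpos x y hxy
    by_contra hne
    obtain ⟨a, b, hP, hS⟩ := hE x y
    rw [hS] at hxy
    have hne' : ¬(x.1 = y.1 ∧ (x.2 : ℕ) = (y.2 : ℕ)) := by
      intro ⟨e1, e2⟩
      exact hne (Prod.ext e1 (Fin.ext e2))
    have hab : a ≤ b := by omega
    have hmem : a ∈ Finset.Ico a (b + 1) := Finset.mem_Ico.mpr ⟨le_refl a, by omega⟩
    have : 0 < ∑ m ∈ Finset.Ico a (b + 1), β m :=
      lt_of_lt_of_le (hpos _) (Finset.single_le_sum (fun i _ => hβ0 i) hmem)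
    exact this.ne' hxy
end

section
/- Let (X, d) be a metric space with distances in a distance monoid R, and let f : X → R be a partial symmetric function defined on a subset D ⊆ X × X. Provided R is such that infima exist and ⊕ distributes over infima of sets (upper semicontinuity: inf(A ⊕ B) = inf A ⊕ inf B), the function d_f defined via paths (i.e., d_f(x,y) is the infimum over all finite chains from x to y through D of the ⊕-sum of f-values) is an R-pseudometric on X extending f via paths, and in particular satisfies the triangle inequality. Moreover, d_f agrees with f on D if and only if for every chain z₀, ..., zₘ with all consecutive pairs and (z₀, zₘ) in D, f(z₀,zₘ) ≤ f(z₀,z₁) ⊕ ... ⊕ f(zₘ₋₁,zₘ). -/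
/-- The set of chain sums from `x` to `y` through `D`. -/
def chainSet {X R : Type*} [AddCommMonoid R] (D : Set (X × X)) (f : X × X → R)
    (x y : X) : Set R :=
  {v : R | ∃ (m : ℕ) (z : ℕ → X),
      z 0 = x ∧ z m = y ∧ (∀ i < m, (z i, z (i + 1)) ∈ D) ∧
      v = ∑ i ∈ Finset.range m, f (z i, z (i + 1))}

lemma chain_symm {X R : Type*} [AddCommMonoid R] {D : Set (X × X)} {f : X × X → R}
    (hDsym : ∀ x y, (x, y) ∈ D → (y, x) ∈ D)
    (hfsym : ∀ x y, f (x, y) = f (y, x))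
    {x y : X} {v : R} (hv : v ∈ chainSet D f x y) : v ∈ chainSet D f y x := by
  obtain ⟨m, z, hz0, hzm, hD, hs⟩ := hv
  refine ⟨m, fun i => z (m - i), by simpa using hzm, by simpa using hz0, ?_, ?_⟩
  · intro i hi
    have h1 : m - i - 1 < m := by omega
    have h2 : m - (i + 1) = m - i - 1 := by omega
    have h3 : m - i - 1 + 1 = m - i := by omega
    have := hDsym _ _ (hD _ h1)
    rwa [h3, ← h2] at this
  · calc v = ∑ i ∈ Finset.range m, f (z i, z (i + 1)) := hs
      _ = ∑ i ∈ Finset.range m, f (z (m - 1 - i), z (m - 1 - i + 1)) :=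
          (Finset.sum_range_reflect (fun j => f (z j, z (j + 1))) m).symm
      _ = ∑ i ∈ Finset.range m, f (z (m - i), z (m - (i + 1))) := by
          refine Finset.sum_congr rfl fun i hi => ?_
          have hi' := Finset.mem_range.mp hi
          have e1 : m - 1 - i = m - (i + 1) := by omega
          have e2 : m - 1 - i + 1 = m - i := by omega
          rw [e2, e1]
          exact hfsym _ _

lemma chain_concat {X R : Type*} [AddCommMonoid R] {D : Set (X × X)} {f : X × X → R}
    {x y z : X} {a b : R} (ha : a ∈ chainSet D f x y) (hb : b ∈ chainSet D f y z) :
    a + b ∈ chainSet D f x z := by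
  obtain ⟨m₁, w₁, h10, h1m, h1D, h1s⟩ := ha
  obtain ⟨m₂, w₂, h20, h2m, h2D, h2s⟩ := hb
  set w : ℕ → X := fun i => if i < m₁ then w₁ i else w₂ (i - m₁) with hw
  have hwmid : ∀ i ≤ m₁, w i = w₁ i := by
    intro i hi
    by_cases h : i < m₁
    · simp [hw, h]
    · have : i = m₁ := by omega
      simp [hw, this, h20, ← h1m]
  have hwhigh : ∀ i, w (m₁ + i) = w₂ i := by
    intro i
    have h : ¬ (m₁ + i < m₁) := by omega
    simp [hw, h]
  refine ⟨m₁ + m₂, w, ?_, ?_, ?_, ?_⟩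
  · rw [hwmid 0 (by omega), h10]
  · have := hwhigh m₂; rwa [h2m] at this
  · intro i hi
    by_cases h : i < m₁
    · rw [hwmid i (by omega), hwmid (i + 1) (by omega)]
      exact h1D i h
    · obtain ⟨j, rfl⟩ : ∃ j, i = m₁ + j := ⟨i - m₁, by omega⟩
      rw [hwhigh j, show m₁ + j + 1 = m₁ + (j + 1) by ring, hwhigh (j + 1)]
      exact h2D j (by omega)
  · rw [Finset.sum_range_add, h1s, h2s]
    congr 1
    · refine Finset.sum_congr rfl fun i hi => ?_
      have hi' := Finset.mem_range.mp hi
      rw [hwmid i (by omega), hwmid (i + 1) (by omega)]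
    · refine Finset.sum_congr rfl fun i hi => ?_
      rw [hwhigh i, show m₁ + i + 1 = m₁ + (i + 1) by ring, hwhigh (i + 1)]

/-- Extension of a partial symmetric function to an R-pseudometric via infima of
chain sums: `d_f` vanishes on the diagonal, is symmetric, satisfies the triangle
inequality (given upper semicontinuity of ⊕ over infima), and `d_f` agrees with
`f` on its domain `D` iff `f` satisfies the chain inequality
`f(z₀,zₘ) ≤ f(z₀,z₁) ⊕ ... ⊕ f(zₘ₋₁,zₘ)` for all chains through `D` with
endpoints in `D`. -/
theorem stmt11 {R : Type*} [CompleteLinearOrder R] [AddCommMonoid R]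
    (h0 : ∀ r : R, 0 ≤ r)
    (hadd : ∀ a b c : R, a ≤ b → c + a ≤ c + b)
    (hinf : ∀ A B : Set R, sInf (Set.image2 (· + ·) A B) = sInf A + sInf B)
    {X : Type*} (D : Set (X × X)) (f : X × X → R)
    (hDsym : ∀ x y, (x, y) ∈ D → (y, x) ∈ D)
    (hfsym : ∀ x y, f (x, y) = f (y, x))
    (df : X → X → R)
    (hdf : ∀ x y, df x y = sInf {v : R | ∃ (m : ℕ) (z : ℕ → X),
      z 0 = x ∧ z m = y ∧ (∀ i < m, (z i, z (i + 1)) ∈ D) ∧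
      v = ∑ i ∈ Finset.range m, f (z i, z (i + 1))}) :
    (∀ x, df x x = 0) ∧
    (∀ x y, df x y = df y x) ∧
    (∀ x y z, df x z ≤ df x y + df y z) ∧
    ((∀ p ∈ D, df p.1 p.2 = f p) ↔
      ∀ (m : ℕ) (z : ℕ → X), (z 0, z m) ∈ D →
        (∀ i < m, (z i, z (i + 1)) ∈ D) →
        f (z 0, z m) ≤ ∑ i ∈ Finset.range m, f (z i, z (i + 1))) := by
  have hdf' : ∀ x y, df x y = sInf (chainSet D f x y) := hdf
  have zero_mem : ∀ x : X, (0 : R) ∈ chainSet D f x x := fun x =>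
    ⟨0, fun _ => x, rfl, rfl, by simp, by simp⟩
  have f_mem : ∀ x y, (x, y) ∈ D → f (x, y) ∈ chainSet D f x y := by
    intro x y hxy
    refine ⟨1, fun i => if i = 0 then x else y, by simp, by simp, ?_, by simp⟩
    intro i hi
    interval_cases i
    simpa using hxy
  refine ⟨?_, ?_, ?_, ?_⟩
  · intro x
    exact le_antisymm (by rw [hdf']; exact sInf_le (zero_mem x)) (h0 _)
  · intro x y
    rw [hdf', hdf']
    exact le_antisymm (sInf_le_sInf fun v hv => chain_symm hDsym hfsym hv)
      (sInf_le_sInf fun v hv => chain_symm hDsym hfsym hv)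
  · intro x y z
    rw [hdf' x z, hdf' x y, hdf' y z, ← hinf]
    apply sInf_le_sInf
    rintro v ⟨a, ha, b, hb, rfl⟩
    exact chain_concat ha hb
  · constructor
    · intro h m z hzD hcons
      have := h (z 0, z m) hzD
      rw [hdf'] at this
      rw [← this]
      exact sInf_le ⟨m, z, rfl, rfl, hcons, rfl⟩
    · rintro h ⟨x, y⟩ hp
      rw [hdf']
      refine le_antisymm (sInf_le (f_mem x y hp)) (le_sInf ?_)
      rintro v ⟨m, z, hz0, hzm, hcons, rfl⟩
      have : (z 0, z m) ∈ D := by rw [hz0, hzm]; exact hp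
      have := h m z this hcons
      rwa [hz0, hzm] at this
end
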